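/- arXiv:2305.07226 — 8 statements merged into one kernel-verified Lean document; each statement's English description precedes it below -/
import Mathlib

section
/- Under the conditional independence assumption Z ⟂ R | (Y, A), the odds ratio function does not depend on z: for all values a, y, z with positive joint probability, OR(a,y,z) = [f(y | R=0, a, z) · f(y₁ | R=1, a, z)] / [f(y | R=1, a, z) · f(y₁ | R=0, a, z)] equals OR(a,y) := [f(R=0 | a, y) · f(R=1 | a, y₁)] / [f(R=1 | a, y) · f(R=0 | a, y₁)]. -/
open Finset

variable {A Y Z : Type} [Fintype A] [Fintype Y] [Fintype Z]

/-- Marginal mass `f(a, y)` of the joint mass function `f` on `(A, Y, Z, R)`,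
with `R` encoded by `Bool` (`true` meaning `R = 1`). -/
noncomputable def mAY (f : A → Y → Z → Bool → ℝ) (a : A) (y : Y) : ℝ :=
  ∑ z, ∑ r, f a y z r

/-- Marginal mass `f(a, y, z)`. -/
noncomputable def mAYZ (f : A → Y → Z → Bool → ℝ) (a : A) (y : Y) (z : Z) : ℝ :=
  ∑ r, f a y z r

/-- Marginal mass `f(a, y, r)`. -/
noncomputable def mAYR (f : A → Y → Z → Bool → ℝ) (a : A) (y : Y) (r : Bool) : ℝ :=
  ∑ z, f a y z r

/-- Marginal mass `f(a)`. -/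
noncomputable def mA (f : A → Y → Z → Bool → ℝ) (a : A) : ℝ :=
  ∑ y, ∑ z, ∑ r, f a y z r

/-- Marginal mass `f(a, r)`. -/
noncomputable def mAR (f : A → Y → Z → Bool → ℝ) (a : A) (r : Bool) : ℝ :=
  ∑ y, ∑ z, f a y z r

/-- Marginal mass `f(a, z)`. -/
noncomputable def mAZ (f : A → Y → Z → Bool → ℝ) (a : A) (z : Z) : ℝ :=
  ∑ y, ∑ r, f a y z r

/-- Marginal mass `f(a, z, r)`. -/
noncomputable def mAZR (f : A → Y → Z → Bool → ℝ) (a : A) (z : Z) (r : Bool) : ℝ :=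
  ∑ y, f a y z r

/-- The shadow-variable assumption (a): the conditional independence `Z ⟂ R | (Y, A)`,
expressed via joint masses as `f(a,y,z,r) · f(a,y) = f(a,y,z) · f(a,y,r)`,
i.e. `f(z, r | y, a) = f(z | y, a) · f(r | y, a)`. -/
def CondIndepZR (f : A → Y → Z → Bool → ℝ) : Prop :=
  ∀ (a : A) (y : Y) (z : Z) (r : Bool),
    f a y z r * mAY f a y = mAYZ f a y z * mAYR f a y r

/-- The odds-ratio function
`OR(a,y) = [f(R=0 | a, y) · f(R=1 | a, y₁)] / [f(R=1 | a, y) · f(R=0 | a, y₁)]`,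
with reference value `y₁`. -/
noncomputable def OddsRatio (f : A → Y → Z → Bool → ℝ) (y₁ : Y) (a : A) (y : Y) : ℝ :=
  ((mAYR f a y false / mAY f a y) * (mAYR f a y₁ true / mAY f a y₁)) /
    ((mAYR f a y true / mAY f a y) * (mAYR f a y₁ false / mAY f a y₁))

/-- equation (3.4): under the shadow-variable conditional independence
`Z ⟂ R | (Y, A)`, the odds ratio function
`OR(a,y,z) = [f(y | R=0, a, z) · f(y₁ | R=1, a, z)] / [f(y | R=1, a, z) · f(y₁ | R=0, a, z)]`
does not depend on `z`: it equals
`OR(a,y) = [f(R=0 | a, y) · f(R=1 | a, y₁)] / [f(R=1 | a, y) · f(R=0 | a, y₁)]`. -/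
theorem oddsRatio_eq_of_condIndep
    (f : A → Y → Z → Bool → ℝ)
    (hpos : ∀ (a : A) (y : Y) (z : Z) (r : Bool), 0 < f a y z r)
    (hsum : ∑ a, ∑ y, ∑ z, ∑ r, f a y z r = 1)
    (hci : CondIndepZR f) (y₁ : Y) :
    ∀ (a : A) (y : Y) (z : Z),
      ((f a y z false / mAZR f a z false) * (f a y₁ z true / mAZR f a z true)) /
          ((f a y z true / mAZR f a z true) * (f a y₁ z false / mAZR f a z false)) =
        OddsRatio f y₁ a y := by
  intro a y z
  have hz : (Finset.univ : Finset Z).Nonempty := ⟨z, Finset.mem_univ z⟩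
  have hy : (Finset.univ : Finset Y).Nonempty := ⟨y, Finset.mem_univ y⟩
  have hb : (Finset.univ : Finset Bool).Nonempty := ⟨true, Finset.mem_univ true⟩
  have hAY : ∀ y', 0 < mAY f a y' := fun y' =>
    Finset.sum_pos (fun z' _ => Finset.sum_pos (fun r _ => hpos a y' z' r) hb) hz
  have hAYR : ∀ y' r, 0 < mAYR f a y' r := fun y' r =>
    Finset.sum_pos (fun z' _ => hpos a y' z' r) hz
  have hAYZ : ∀ y', 0 < mAYZ f a y' z := fun y' =>
    Finset.sum_pos (fun r _ => hpos a y' z r) hb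
  have hAZR : ∀ r, 0 < mAZR f a z r := fun r =>
    Finset.sum_pos (fun y' _ => hpos a y' z r) hy
  have e : ∀ (y' : Y) (r : Bool), f a y' z r = mAYZ f a y' z * mAYR f a y' r / mAY f a y' := by
    intro y' r
    rw [eq_div_iff (ne_of_gt (hAY y'))]
    exact hci a y' z r
  rw [OddsRatio, e y false, e y true, e y₁ false, e y₁ true]
  field_simp [(hAY y).ne', (hAY y₁).ne', (hAYR y true).ne', (hAYR y false).ne',
    (hAYR y₁ true).ne', (hAYR y₁ false).ne', (hAYZ y).ne', (hAYZ y₁).ne',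
    (hAZR true).ne', (hAZR false).ne']
end

section
/- Under the conditional independence assumption Z ⟂ R | (Y, A), the joint conditional law of (Y,R) given (A,Z) factorizes as f(y, r | a, z) = c(a, z) · f(r | a, y₁) · f(y | R=1, a, z) · OR(a,y)^{1−r} for r ∈ {0,1}, where c(a, z) = [f(R=1 | a) / f(R=1 | a, y₁)] · [f(z | R=1, a) / f(z | a)]. -/
open Finset

variable {A Y Z : Type} [Fintype A] [Fintype Y] [Fintype Z]

/-- The normalizing constant
`c(a, z) = [f(R=1 | a) / f(R=1 | a, y₁)] · [f(z | R=1, a) / f(z | a)]`. -/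
noncomputable def normConst (f : A → Y → Z → Bool → ℝ) (y₁ : Y) (a : A) (z : Z) : ℝ :=
  ((mAR f a true / mA f a) / (mAYR f a y₁ true / mAY f a y₁)) *
    ((mAZR f a z true / mAR f a true) / (mAZ f a z / mA f a))

/-! The proof is bookkeeping once one notices that `Z ⟂ R | (Y, A)` says that
`f(a, y, z, r) / f(a, y, r)` does not depend on `r`, so that
`f(a, y, z, r) = f(a, y, z, 1) · f(a, y, r) / f(a, y, 1)`. Substituting this, the factor
`f(r | a, y₁) · OR(a, y)^{1-r}` collapses to `f(1 | a, y₁) · f(a, y, r) / f(a, y, 1)`, and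
`c(a, z) · f(1 | a, y₁)` collapses to `f(a, z, 1) / f(a, z)`. -/

section

variable {f : A → Y → Z → Bool → ℝ}

lemma mAY_pos [Nonempty Z] (hpos : ∀ a y z r, 0 < f a y z r) (a : A) (y : Y) :
    0 < mAY f a y :=
  sum_pos (fun z _ => sum_pos (fun r _ => hpos a y z r) univ_nonempty) univ_nonempty

lemma mAYR_pos [Nonempty Z] (hpos : ∀ a y z r, 0 < f a y z r) (a : A) (y : Y) (r : Bool) :
    0 < mAYR f a y r :=
  sum_pos (fun z _ => hpos a y z r) univ_nonempty

lemma mA_pos [Nonempty Y] [Nonempty Z] (hpos : ∀ a y z r, 0 < f a y z r) (a : A) :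
    0 < mA f a :=
  sum_pos (fun y _ => mAY_pos hpos a y) univ_nonempty

lemma mAR_pos [Nonempty Y] [Nonempty Z] (hpos : ∀ a y z r, 0 < f a y z r) (a : A) (r : Bool) :
    0 < mAR f a r :=
  sum_pos (fun y _ => mAYR_pos hpos a y r) univ_nonempty

lemma mAZR_pos [Nonempty Y] (hpos : ∀ a y z r, 0 < f a y z r) (a : A) (z : Z) (r : Bool) :
    0 < mAZR f a z r :=
  sum_pos (fun y _ => hpos a y z r) univ_nonempty

lemma mAZ_pos [Nonempty Y] (hpos : ∀ a y z r, 0 < f a y z r) (a : A) (z : Z) :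
    0 < mAZ f a z :=
  sum_pos (fun y _ => sum_pos (fun r _ => hpos a y z r) univ_nonempty) univ_nonempty

lemma CondIndepZR.mul_mAYR_eq (hci : CondIndepZR f) {a : A} {y : Y}
    (hy : mAY f a y ≠ 0) (z : Z) (r r' : Bool) :
    f a y z r * mAYR f a y r' = f a y z r' * mAYR f a y r := by
  refine mul_right_cancel₀ hy ?_
  linear_combination mAYR f a y r' * hci a y z r - mAYR f a y r * hci a y z r'

lemma normConst_mul_mAYR_div_mAY [Nonempty Y] [Nonempty Z]
    (hpos : ∀ a y z r, 0 < f a y z r) (y₁ : Y) (a : A) (z : Z) :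
    normConst f y₁ a z * (mAYR f a y₁ true / mAY f a y₁) = mAZR f a z true / mAZ f a z := by
  have := (mAY_pos hpos a y₁).ne'
  have := (mAYR_pos hpos a y₁ true).ne'
  have := (mA_pos hpos a).ne'
  have := (mAR_pos hpos a true).ne'
  have := (mAZ_pos hpos a z).ne'
  unfold normConst
  field_simp

lemma mAYR_div_mAY_mul_oddsRatio_pow [Nonempty Z]
    (hpos : ∀ a y z r, 0 < f a y z r) (y₁ : Y) (a : A) (y : Y) (r : Bool) :
    mAYR f a y₁ r / mAY f a y₁ * OddsRatio f y₁ a y ^ (if r then 0 else 1 : ℕ) =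
      mAYR f a y₁ true / mAY f a y₁ * (mAYR f a y r / mAYR f a y true) := by
  have := (mAY_pos hpos a y).ne'
  have := (mAY_pos hpos a y₁).ne'
  have := (mAYR_pos hpos a y true).ne'
  have := (mAYR_pos hpos a y₁ false).ne'
  cases r
  · simp only [OddsRatio, Bool.false_eq_true, if_false, pow_one]
    field_simp
  · simp only [if_true, pow_zero, mul_one]
    field_simp

end

theorem factorization_of_condIndep_general
    (f : A → Y → Z → Bool → ℝ)
    (hpos : ∀ (a : A) (y : Y) (z : Z) (r : Bool), 0 < f a y z r)
    (hci : CondIndepZR f) (y₁ : Y) :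
    ∀ (a : A) (y : Y) (z : Z) (r : Bool),
      f a y z r / mAZ f a z =
        normConst f y₁ a z * (mAYR f a y₁ r / mAY f a y₁) *
          (f a y z true / mAZR f a z true) *
          (OddsRatio f y₁ a y) ^ (if r then 0 else 1 : ℕ) := by
  intro a y z r
  have : Nonempty Y := ⟨y₁⟩
  have : Nonempty Z := ⟨z⟩
  have hfactor := hci.mul_mAYR_eq (mAY_pos hpos a y).ne' z true r
  have := (mAYR_pos hpos a y true).ne'
  have := (mAZR_pos hpos a z true).ne'
  have := (mAZ_pos hpos a z).ne'
  calc f a y z r / mAZ f a z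
      = mAZR f a z true / mAZ f a z * (f a y z true / mAZR f a z true) *
          (mAYR f a y r / mAYR f a y true) := by
        field_simp
        linear_combination -hfactor
    _ = normConst f y₁ a z * (mAYR f a y₁ true / mAY f a y₁) *
          (f a y z true / mAZR f a z true) * (mAYR f a y r / mAYR f a y true) := by
        rw [normConst_mul_mAYR_div_mAY hpos]
    _ = normConst f y₁ a z * (f a y z true / mAZR f a z true) *
          (mAYR f a y₁ r / mAY f a y₁ * OddsRatio f y₁ a y ^ (if r then 0 else 1 : ℕ)) := by
        rw [mAYR_div_mAY_mul_oddsRatio_pow hpos]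
        ring
    _ = normConst f y₁ a z * (mAYR f a y₁ r / mAY f a y₁) *
          (f a y z true / mAZR f a z true) *
          (OddsRatio f y₁ a y) ^ (if r then 0 else 1 : ℕ) := by
        ring

/-- equation (3.5): under the shadow-variable conditional independence
`Z ⟂ R | (Y, A)`, the joint conditional law of `(Y, R)` given `(A, Z)` factorizes as
`f(y, r | a, z) = c(a,z) · f(r | a, y₁) · f(y | R=1, a, z) · OR(a,y)^{1-r}`. -/
theorem factorization_of_condIndep
    (f : A → Y → Z → Bool → ℝ)
    (hpos : ∀ (a : A) (y : Y) (z : Z) (r : Bool), 0 < f a y z r)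
    (hsum : ∑ a, ∑ y, ∑ z, ∑ r, f a y z r = 1)
    (hci : CondIndepZR f) (y₁ : Y) :
    ∀ (a : A) (y : Y) (z : Z) (r : Bool),
      f a y z r / mAZ f a z =
        normConst f y₁ a z * (mAYR f a y₁ r / mAY f a y₁) *
          (f a y z true / mAZR f a z true) *
          (OddsRatio f y₁ a y) ^ (if r then 0 else 1 : ℕ) :=
  factorization_of_condIndep_general f hpos hci y₁
end

section
/- Under the conditional independence assumption Z ⟂ R | (Y, A), the baseline propensity at the reference value satisfies f(R=1 | a, y₁) = E[OR(a,Y) | R=1, A=a] / ( f(R=0 | a)/f(R=1 | a) + E[OR(a,Y) | R=1, A=a] ), where E[OR(a,Y) | R=1, A=a] = Σ_y OR(a,y) · f(y | R=1, a). -/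
open Finset

variable {A Y Z : Type} [Fintype A] [Fintype Y] [Fintype Z]

/-- The conditional expectation of the odds ratio among complete cases given `A = a`:
`E[OR(a,Y) | R=1, A=a] = Σ_y OR(a,y) · f(y | R=1, a)`. -/
noncomputable def expOR (f : A → Y → Z → Bool → ℝ) (y₁ : Y) (a : A) : ℝ :=
  ∑ y, OddsRatio f y₁ a y * (mAYR f a y true / mAR f a true)

/-- equation (3.6): under the shadow-variable conditional independence
`Z ⟂ R | (Y, A)`, the baseline propensity at the reference value satisfies
`f(R=1 | a, y₁) = E[OR(a,Y) | R=1, A=a] / (f(R=0|a)/f(R=1|a) + E[OR(a,Y) | R=1, A=a])`. -/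
theorem baseline_propensity_of_condIndep
    (f : A → Y → Z → Bool → ℝ)
    (hpos : ∀ (a : A) (y : Y) (z : Z) (r : Bool), 0 < f a y z r)
    (hsum : ∑ a, ∑ y, ∑ z, ∑ r, f a y z r = 1)
    (hci : CondIndepZR f) (y₁ : Y) :
    ∀ a : A,
      mAYR f a y₁ true / mAY f a y₁ =
        expOR f y₁ a / ((mAR f a false / mA f a) / (mAR f a true / mA f a) + expOR f y₁ a) := by

  haveI hA : Nonempty A := by
    by_contra h; rw [not_nonempty_iff] at h; simp at hsum
  haveI hY : Nonempty Y := by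
    by_contra h; rw [not_nonempty_iff] at h; simp at hsum
  haveI hZ : Nonempty Z := by
    by_contra h; rw [not_nonempty_iff] at h; simp at hsum
  intro a
  have hYR : ∀ (y : Y) (r : Bool), 0 < mAYR f a y r := fun y r =>
    Finset.sum_pos (fun z _ => hpos a y z r) Finset.univ_nonempty
  have hAY : ∀ y, mAY f a y = mAYR f a y false + mAYR f a y true := by
    intro y
    simp [mAY, mAYR, Finset.sum_add_distrib, add_comm]
  have hAYpos : ∀ y, 0 < mAY f a y := fun y =>
    (hAY y) ▸ add_pos (hYR y false) (hYR y true)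
  have hAR : ∀ r : Bool, mAR f a r = ∑ y, mAYR f a y r := fun r => rfl
  have hARpos : ∀ r : Bool, 0 < mAR f a r := fun r =>
    (hAR r) ▸ Finset.sum_pos (fun y _ => hYR y r) Finset.univ_nonempty
  have hmA : mA f a = mAR f a false + mAR f a true := by
    simp [mA, mAR, Finset.sum_add_distrib, add_comm]
  have hE : expOR f y₁ a =
      (mAYR f a y₁ true * mAR f a false) / (mAYR f a y₁ false * mAR f a true) := by
    unfold expOR OddsRatio
    have hterm : ∀ y ∈ Finset.univ, (((mAYR f a y false / mAY f a y) *
          (mAYR f a y₁ true / mAY f a y₁)) /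
        ((mAYR f a y true / mAY f a y) * (mAYR f a y₁ false / mAY f a y₁))) *
          (mAYR f a y true / mAR f a true) =
        mAYR f a y false *
          (mAYR f a y₁ true / (mAYR f a y₁ false * mAR f a true)) := by
      intro y _
      have n1 := (hAYpos y).ne'
      have n2 := (hAYpos y₁).ne'
      have n3 := (hYR y true).ne'
      have n4 := (hYR y₁ false).ne'
      have n5 := (hARpos true).ne'
      field_simp
    rw [Finset.sum_congr rfl hterm, ← Finset.sum_mul, ← hAR false]
    field_simp
  rw [hE, hAY y₁, hmA]
  have h1 := (hYR y₁ false).ne'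
  have h2 := (hYR y₁ true).ne'
  have h3 := (hARpos false).ne'
  have h4 := (hARpos true).ne'
  have h5 : mAYR f a y₁ false + mAYR f a y₁ true ≠ 0 :=
    (add_pos (hYR y₁ false) (hYR y₁ true)).ne'
  have h6 : mAR f a false + mAR f a true ≠ 0 :=
    (add_pos (hARpos false) (hARpos true)).ne'
  have hden : mAR f a false / (mAR f a false + mAR f a true) /
        (mAR f a true / (mAR f a false + mAR f a true)) +
      mAYR f a y₁ true * mAR f a false / (mAYR f a y₁ false * mAR f a true) ≠ 0 := by
    have : 0 < mAR f a false / (mAR f a false + mAR f a true) /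
        (mAR f a true / (mAR f a false + mAR f a true)) :=
      div_pos (div_pos (hARpos false) (add_pos (hARpos false) (hARpos true)))
        (div_pos (hARpos true) (add_pos (hARpos false) (hARpos true)))
    have h' : 0 < mAYR f a y₁ true * mAR f a false / (mAYR f a y₁ false * mAR f a true) :=
      div_pos (mul_pos (hYR y₁ true) (hARpos false)) (mul_pos (hYR y₁ false) (hARpos true))
    positivity
  rw [eq_div_iff hden]
  field_simp
end

section
/- Under the conditional independence assumption Z ⟂ R | (Y, A), the normalized odds ratio function ÕR(a,y) := OR(a,y) / E[OR(a,Y) | R=1, A=a] satisfies the integral equation E[ÕR(a,Y) | R=1, A=a, Z=z] = f(z | R=0, a) / f(z | R=1, a) for all a, z with positive joint probability, where E[ÕR(a,Y) | R=1, A=a, Z=z] = Σ_y ÕR(a,y) · f(y | R=1, a, z). -/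
open Finset

variable {A Y Z : Type} [Fintype A] [Fintype Y] [Fintype Z]

/-- The normalized odds-ratio function `ÕR(a,y) = OR(a,y) / E[OR(a,Y) | R=1, A=a]`. -/
noncomputable def tildeOR (f : A → Y → Z → Bool → ℝ) (y₁ : Y) (a : A) (y : Y) : ℝ :=
  OddsRatio f y₁ a y / expOR f y₁ a

/-- equation (3.9): under the shadow-variable conditional independence
`Z ⟂ R | (Y, A)`, the normalized odds ratio satisfies the integral equation
`E[ÕR(a,Y) | R=1, A=a, Z=z] = Σ_y ÕR(a,y) · f(y | R=1, a, z) = f(z | R=0, a) / f(z | R=1, a)`. -/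
theorem integral_equation_of_condIndep
    (f : A → Y → Z → Bool → ℝ)
    (hpos : ∀ (a : A) (y : Y) (z : Z) (r : Bool), 0 < f a y z r)
    (hsum : ∑ a, ∑ y, ∑ z, ∑ r, f a y z r = 1)
    (hci : CondIndepZR f) (y₁ : Y) :
    ∀ (a : A) (z : Z),
      ∑ y, tildeOR f y₁ a y * (f a y z true / mAZR f a z true) =
        (mAZR f a z false / mAR f a false) / (mAZR f a z true / mAR f a true) := by

  -- nonemptiness of Y and Z
  have hY : Nonempty Y := by
    rcases isEmpty_or_nonempty Y with h | h
    · simp at hsum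
    · exact h
  have hZ : Nonempty Z := by
    rcases isEmpty_or_nonempty Z with h | h
    · simp at hsum
    · exact h
  intro a z
  -- positivity of marginals
  have hAYR : ∀ (y : Y) (r : Bool), 0 < mAYR f a y r := fun y r =>
    Finset.sum_pos (fun z _ => hpos a y z r) Finset.univ_nonempty
  have hAY : ∀ (y : Y), 0 < mAY f a y := fun y =>
    Finset.sum_pos (fun z _ => Finset.sum_pos (fun r _ => hpos a y z r) Finset.univ_nonempty)
      Finset.univ_nonempty
  have hAZR : ∀ (r : Bool), 0 < mAZR f a z r := fun r =>
    Finset.sum_pos (fun y _ => hpos a y z r) Finset.univ_nonempty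
  have hAR : ∀ (r : Bool), 0 < mAR f a r := fun r =>
    Finset.sum_pos (fun y _ => Finset.sum_pos (fun z _ => hpos a y z r) Finset.univ_nonempty)
      Finset.univ_nonempty
  set c : ℝ := mAYR f a y₁ true / mAYR f a y₁ false with hc
  have hcpos : 0 < c := div_pos (hAYR y₁ true) (hAYR y₁ false)
  -- odds ratio simplification
  have hOR : ∀ y : Y, OddsRatio f y₁ a y = c * (mAYR f a y false / mAYR f a y true) := by
    intro y
    unfold OddsRatio
    rw [hc]
    field_simp [(hAY y).ne', (hAY y₁).ne', (hAYR y true).ne', (hAYR y₁ false).ne']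
  -- key pointwise identity
  have hkey : ∀ y : Y, OddsRatio f y₁ a y * f a y z true = c * f a y z false := by
    intro y
    have h1 := hci a y z true
    have h0 := hci a y z false
    have hswap : mAYR f a y false * f a y z true = mAYR f a y true * f a y z false := by
      have hAYne := (hAY y).ne'
      have e1 : f a y z true = mAYZ f a y z * mAYR f a y true / mAY f a y := by
        field_simp; linarith [h1]
      have e0 : f a y z false = mAYZ f a y z * mAYR f a y false / mAY f a y := by
        field_simp; linarith [h0]
      rw [e1, e0]; field_simp
    have hd : mAYR f a y false / mAYR f a y true * f a y z true = f a y z false := by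
      rw [div_mul_eq_mul_div, hswap, mul_div_cancel_left₀ _ (hAYR y true).ne']
    rw [hOR y, mul_assoc, hd]
  -- expOR computation
  have hexp : expOR f y₁ a = c * (mAR f a false / mAR f a true) := by
    unfold expOR
    have : ∀ y : Y, OddsRatio f y₁ a y * (mAYR f a y true / mAR f a true)
        = c * mAYR f a y false / mAR f a true := by
      intro y
      rw [hOR y]
      field_simp [(hAYR y true).ne']
    rw [Finset.sum_congr rfl (fun y _ => this y)]
    rw [← Finset.sum_div, ← Finset.mul_sum]
    have : ∑ y, mAYR f a y false = mAR f a false := by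
      simp [mAYR, mAR]
    rw [this, mul_div_assoc]
  have hexppos : 0 < expOR f y₁ a := by
    rw [hexp]; exact mul_pos hcpos (div_pos (hAR false) (hAR true))
  -- main sum
  have hmain : ∑ y, tildeOR f y₁ a y * (f a y z true / mAZR f a z true)
      = c * mAZR f a z false / (expOR f y₁ a * mAZR f a z true) := by
    have : ∀ y : Y, tildeOR f y₁ a y * (f a y z true / mAZR f a z true)
        = c * f a y z false / (expOR f y₁ a * mAZR f a z true) := by
      intro y
      unfold tildeOR
      rw [div_mul_div_comm, ← hkey y]
    rw [Finset.sum_congr rfl (fun y _ => this y)]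
    rw [← Finset.sum_div, ← Finset.mul_sum]
    rfl
  rw [hmain, hexp, hc]
  field_simp [(hAYR y₁ true).ne', (hAYR y₁ false).ne', (hAR false).ne', (hAR true).ne',
    (hAZR true).ne', (hAZR false).ne']
end

section
/- (Identification) Suppose f₁ and f₂ are two everywhere-positive joint mass functions for (A, Y, Z, R) on the same finite types, both satisfying the conditional independence Z ⟂ R | (Y, A), and both inducing the same observed-data law: f₁(y, R=1, a, z) = f₂(y, R=1, a, z) for all (y, a, z) and f₁(R=0, a, z) = f₂(R=0, a, z) for all (a, z). If the complete-case conditional law f₁(y | R=1, a, z) is complete — meaning that for every function h(a, y), if Σ_y h(a,y) · f₁(y | R=1, a, z) = 0 for all a, z, then h(a,y) = 0 for all a, y — then f₁ = f₂, i.e., the full data law is identified from the observed data law. -/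
open Finset

variable {A Y Z : Type} [Fintype A] [Fintype Y] [Fintype Z]

/-- Completeness of the complete-case conditional law `f(y | R=1, a, z)`:
for every function `h(a,y)`, if `Σ_y h(a,y) · f(y | R=1, a, z) = 0` for all `a, z`,
then `h ≡ 0`. -/
def CompleteCaseComplete (f : A → Y → Z → Bool → ℝ) : Prop :=
  ∀ h : A → Y → ℝ,
    (∀ (a : A) (z : Z), ∑ y, h a y * (f a y z true / mAZR f a z true) = 0) →
    ∀ (a : A) (y : Y), h a y = 0

/-- Theorem 1, identification: if two everywhere-positive joint mass
functions `f₁, f₂` for `(A, Y, Z, R)` both satisfy the shadow-variable conditional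
independence `Z ⟂ R | (Y, A)`, induce the same observed-data law
(`f₁(y, R=1, a, z) = f₂(y, R=1, a, z)` and `f₁(R=0, a, z) = f₂(R=0, a, z)`), and the
complete-case conditional law `f₁(y | R=1, a, z)` is complete, then `f₁ = f₂`:
the full data law is identified from the observed data law. -/
theorem full_data_law_identified
    (f₁ f₂ : A → Y → Z → Bool → ℝ)
    (hpos₁ : ∀ (a : A) (y : Y) (z : Z) (r : Bool), 0 < f₁ a y z r)
    (hpos₂ : ∀ (a : A) (y : Y) (z : Z) (r : Bool), 0 < f₂ a y z r)
    (hsum₁ : ∑ a, ∑ y, ∑ z, ∑ r, f₁ a y z r = 1)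
    (hsum₂ : ∑ a, ∑ y, ∑ z, ∑ r, f₂ a y z r = 1)
    (hci₁ : CondIndepZR f₁) (hci₂ : CondIndepZR f₂)
    (hobs₁ : ∀ (a : A) (y : Y) (z : Z), f₁ a y z true = f₂ a y z true)
    (hobs₀ : ∀ (a : A) (z : Z), mAZR f₁ a z false = mAZR f₂ a z false)
    (hcomplete : CompleteCaseComplete f₁) :
    f₁ = f₂ := by
  haveI : Nonempty Y := by
    by_contra h; rw [not_nonempty_iff] at h; simp at hsum₁
  haveI : Nonempty Z := by
    by_contra h; rw [not_nonempty_iff] at h; simp at hsum₁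
  have pos_mAY : ∀ (f : A → Y → Z → Bool → ℝ), (∀ a y z r, 0 < f a y z r) →
      ∀ a y, 0 < mAY f a y := fun f hp a y =>
    Finset.sum_pos (fun z _ => Finset.sum_pos (fun r _ => hp a y z r) Finset.univ_nonempty)
      Finset.univ_nonempty
  have pos_mAYR : ∀ (f : A → Y → Z → Bool → ℝ), (∀ a y z r, 0 < f a y z r) →
      ∀ a y r, 0 < mAYR f a y r := fun f hp a y r =>
    Finset.sum_pos (fun z _ => hp a y z r) Finset.univ_nonempty
  have pos_mAZR : ∀ (f : A → Y → Z → Bool → ℝ), (∀ a y z r, 0 < f a y z r) →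
      ∀ a z r, 0 < mAZR f a z r := fun f hp a z r =>
    Finset.sum_pos (fun y _ => hp a y z r) Finset.univ_nonempty
  have ratio : ∀ (f : A → Y → Z → Bool → ℝ), (∀ a y z r, 0 < f a y z r) → CondIndepZR f →
      ∀ a y z, f a y z false = f a y z true * (mAYR f a y false / mAYR f a y true) := by
    intro f hp hci a y z
    have h1 := hci a y z false
    have h2 := hci a y z true
    have hmAY := (pos_mAY f hp a y).ne'
    have ht := (pos_mAYR f hp a y true).ne'
    rw [← mul_div_assoc, eq_div_iff ht]
    apply mul_right_cancel₀ hmAY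
    linear_combination mAYR f a y true * h1 - mAYR f a y false * h2
  have hrho : ∀ a y, mAYR f₁ a y false / mAYR f₁ a y true
      = mAYR f₂ a y false / mAYR f₂ a y true := by
    intro a y
    have key := hcomplete (fun a y => mAYR f₁ a y false / mAYR f₁ a y true
      - mAYR f₂ a y false / mAYR f₂ a y true) ?_ a y
    · linarith [key]
    intro a z
    have hM := (pos_mAZR f₁ hpos₁ a z true).ne'
    have e1 : ∑ y, (mAYR f₁ a y false / mAYR f₁ a y true) * f₁ a y z true
        = mAZR f₁ a z false := by
      rw [mAZR]
      refine Finset.sum_congr rfl fun y _ => ?_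
      rw [ratio f₁ hpos₁ hci₁ a y z]; ring
    have e2 : ∑ y, (mAYR f₂ a y false / mAYR f₂ a y true) * f₁ a y z true
        = mAZR f₂ a z false := by
      rw [mAZR]
      refine Finset.sum_congr rfl fun y _ => ?_
      rw [hobs₁ a y z, ratio f₂ hpos₂ hci₂ a y z]; ring
    have : ∑ y, ((mAYR f₁ a y false / mAYR f₁ a y true
        - mAYR f₂ a y false / mAYR f₂ a y true) * f₁ a y z true) = 0 := by
      simp only [sub_mul]
      rw [Finset.sum_sub_distrib, e1, e2, hobs₀ a z, sub_self]
    calc ∑ y, ((mAYR f₁ a y false / mAYR f₁ a y true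
          - mAYR f₂ a y false / mAYR f₂ a y true) * (f₁ a y z true / mAZR f₁ a z true))
        = (∑ y, ((mAYR f₁ a y false / mAYR f₁ a y true
          - mAYR f₂ a y false / mAYR f₂ a y true) * f₁ a y z true)) / mAZR f₁ a z true := by
          rw [Finset.sum_div]
          exact Finset.sum_congr rfl fun y _ => by ring
      _ = 0 := by rw [this, zero_div]
  funext a y z r
  cases r with
  | false =>
      rw [ratio f₁ hpos₁ hci₁ a y z, ratio f₂ hpos₂ hci₂ a y z, hobs₁ a y z, hrho a y]
  | true => exact hobs₁ a y z
end

section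
/- Under the conditional independence assumption Z ⟂ R | (Y, A), the normalized odds ratio function admits the closed form ÕR(a,y) = [f(R=0 | a, y) · f(R=1 | a)] / [f(R=1 | a, y) · f(R=0 | a)] for all a, y with positive joint probability. -/
open Finset

variable {A Y Z : Type} [Fintype A] [Fintype Y] [Fintype Z]

/-- under the shadow-variable conditional independence `Z ⟂ R | (Y, A)`,
the normalized odds ratio admits the closed form
`ÕR(a,y) = [f(R=0 | a, y) · f(R=1 | a)] / [f(R=1 | a, y) · f(R=0 | a)]`. -/
theorem tildeOR_closed_form
    (f : A → Y → Z → Bool → ℝ)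
    (hpos : ∀ (a : A) (y : Y) (z : Z) (r : Bool), 0 < f a y z r)
    (hsum : ∑ a, ∑ y, ∑ z, ∑ r, f a y z r = 1)
    (hci : CondIndepZR f) (y₁ : Y) :
    ∀ (a : A) (y : Y),
      tildeOR f y₁ a y =
        ((mAYR f a y false / mAY f a y) * (mAR f a true / mA f a)) /
          ((mAYR f a y true / mAY f a y) * (mAR f a false / mA f a)) := by
  -- nonemptiness from hsum
  have hZ : Nonempty Z := by
    by_contra h
    rw [not_nonempty_iff] at h
    simp at hsum
  have hY : Nonempty Y := by
    by_contra h
    rw [not_nonempty_iff] at h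
    simp at hsum
  have hmAY : ∀ a y, 0 < mAY f a y := fun a y =>
    Finset.sum_pos (fun z _ => Finset.sum_pos (fun r _ => hpos a y z r) Finset.univ_nonempty)
      Finset.univ_nonempty
  have hmAYR : ∀ a y r, 0 < mAYR f a y r := fun a y r =>
    Finset.sum_pos (fun z _ => hpos a y z r) Finset.univ_nonempty
  have hmAR : ∀ a r, 0 < mAR f a r := fun a r =>
    Finset.sum_pos (fun y _ => Finset.sum_pos (fun z _ => hpos a y z r) Finset.univ_nonempty)
      Finset.univ_nonempty
  intro a y
  set C : ℝ := mAYR f a y₁ true / mAYR f a y₁ false with hC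
  have hOR : ∀ y', OddsRatio f y₁ a y' = (mAYR f a y' false / mAYR f a y' true) * C := by
    intro y'
    rw [OddsRatio, hC]
    have h1 := (hmAYR a y' true).ne'
    have h2 := (hmAYR a y₁ false).ne'
    have h3 := (hmAY a y').ne'
    have h4 := (hmAY a y₁).ne'
    field_simp
  have hsumAR : ∀ r, ∑ y', mAYR f a y' r = mAR f a r := fun r => rfl
  have hexp : expOR f y₁ a = C * (mAR f a false / mAR f a true) := by
    rw [expOR]
    have key : ∀ y' ∈ Finset.univ (α := Y), OddsRatio f y₁ a y' * (mAYR f a y' true / mAR f a true)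
        = C / mAR f a true * mAYR f a y' false := by
      intro y' _
      rw [hOR y']
      have h1 := (hmAYR a y' true).ne'
      field_simp
    rw [Finset.sum_congr rfl key, ← Finset.mul_sum, hsumAR]
    ring
  rw [tildeOR, hexp, hOR y, hC]
  have h1 := (hmAYR a y true).ne'
  have h2 := (hmAYR a y false).ne'
  have h3 := (hmAYR a y₁ true).ne'
  have h4 := (hmAYR a y₁ false).ne'
  have h5 := (hmAR a true).ne'
  have h6 := (hmAR a false).ne'
  have h7 := (hmAY a y).ne'
  have hmApos : 0 < mA f a :=
    Finset.sum_pos (fun y' _ => hmAY a y') Finset.univ_nonempty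
  have h8 := hmApos.ne'
  field_simp
end

section
/- Under the conditional independence assumption Z ⟂ R | (Y, A), the conditional expectation of the odds ratio among complete cases given A = a equals E[OR(a,Y) | R=1, A=a] = [f(R=1 | a, y₁) / f(R=0 | a, y₁)] · [f(R=0, a) / f(R=1, a)]. -/
open Finset

variable {A Y Z : Type} [Fintype A] [Fintype Y] [Fintype Z]

/-- under the shadow-variable conditional independence `Z ⟂ R | (Y, A)`,
`E[OR(a,Y) | R=1, A=a] = [f(R=1 | a, y₁) / f(R=0 | a, y₁)] · [f(R=0, a) / f(R=1, a)]`. -/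
theorem expOR_closed_form
    (f : A → Y → Z → Bool → ℝ)
    (hpos : ∀ (a : A) (y : Y) (z : Z) (r : Bool), 0 < f a y z r)
    (hsum : ∑ a, ∑ y, ∑ z, ∑ r, f a y z r = 1)
    (hci : CondIndepZR f) (y₁ : Y) :
    ∀ a : A,
      expOR f y₁ a =
        ((mAYR f a y₁ true / mAY f a y₁) / (mAYR f a y₁ false / mAY f a y₁)) *
          (mAR f a false / mAR f a true) := by
  intro a
  rcases isEmpty_or_nonempty Z with hZ | hZ
  · simp [Finset.univ_eq_empty] at hsum
  rcases isEmpty_or_nonempty Y with hY | hY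
  · simp [Finset.univ_eq_empty] at hsum
  have hMY : ∀ y : Y, 0 < mAY f a y := fun y =>
    Finset.sum_pos (fun z _ => Finset.sum_pos (fun r _ => hpos a y z r) (by simp))
      Finset.univ_nonempty
  have hF : ∀ (y : Y) (r : Bool), 0 < mAYR f a y r := fun y r =>
    Finset.sum_pos (fun z _ => hpos a y z r) Finset.univ_nonempty
  have hRt : 0 < mAR f a true :=
    Finset.sum_pos (fun y _ => Finset.sum_pos (fun z _ => hpos a y z true)
      Finset.univ_nonempty) Finset.univ_nonempty
  have hmar : ∀ r : Bool, mAR f a r = ∑ y, mAYR f a y r := fun r => rfl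
  unfold expOR
  have key : ∀ y : Y, OddsRatio f y₁ a y * (mAYR f a y true / mAR f a true) =
      ((mAYR f a y₁ true / mAY f a y₁) / (mAYR f a y₁ false / mAY f a y₁)) *
        (mAYR f a y false / mAR f a true) := by
    intro y
    unfold OddsRatio
    have h1 := (hMY y).ne'
    have h2 := (hMY y₁).ne'
    have h3 := (hF y true).ne'
    have h4 := (hF y₁ false).ne'
    have h5 := hRt.ne'
    field_simp
  rw [Finset.sum_congr rfl fun y _ => key y, ← Finset.mul_sum, ← Finset.sum_div,
    ← hmar false]
end

section
/- (Identification of the complier average causal effect) Let Ω be a finite probability space carrying random variables Z ∈ {0,1} (instrument), potential treatments A(0), A(1) ∈ {0,1}, and potential outcomes Y(0), Y(1) ∈ ℝ. Assume: (randomization) Z is independent of the vector (Y(0), Y(1), A(0), A(1)); (monotonicity) A(1) ≥ A(0) pointwise; (nonzero effect of Z on A) E[A(1) − A(0)] ≠ 0; (exclusion restriction) Y(1) = Y(0) on the events {A(1) = A(0) = 0} and {A(1) = A(0) = 1}; and P(Z = 1) ∈ (0,1). Define the observed treatment A = A(Z) and observed outcome Y = Y(Z). Then the complier average causal effect satisfies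 E[Y(1) − Y(0) | A(1) = 1, A(0) = 0] = ( E[Y | Z=1] − E[Y | Z=0] ) / ( E[A | Z=1] − E[A | Z=0] ). -/
open Finset
open scoped Classical

private lemma indep_key
    {Ω : Type*} [Fintype Ω] (P : Ω → ℝ)
    (Zv : Ω → Bool) (A0 A1 : Ω → Bool) (Y0 Y1 : Ω → ℝ)
    (hrand : ∀ (zb : Bool) (y0 y1 : ℝ) (a0 a1 : Bool),
      (∑ ω, if Zv ω = zb ∧ Y0 ω = y0 ∧ Y1 ω = y1 ∧ A0 ω = a0 ∧ A1 ω = a1 then P ω else 0) =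
        (∑ ω, if Zv ω = zb then P ω else 0) *
          (∑ ω, if Y0 ω = y0 ∧ Y1 ω = y1 ∧ A0 ω = a0 ∧ A1 ω = a1 then P ω else 0))
    (zb : Bool) (f : ℝ → ℝ → Bool → Bool → ℝ) :
    (∑ ω, if Zv ω = zb then P ω * f (Y0 ω) (Y1 ω) (A0 ω) (A1 ω) else 0)
      = (∑ ω, if Zv ω = zb then P ω else 0) *
        (∑ ω, P ω * f (Y0 ω) (Y1 ω) (A0 ω) (A1 ω)) := by
  classical
  set W : Ω → ℝ × ℝ × Bool × Bool := fun ω => (Y0 ω, Y1 ω, A0 ω, A1 ω) with hW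
  have hmaps : ∀ ω ∈ (univ : Finset Ω), W ω ∈ univ.image W := fun ω _ =>
    mem_image_of_mem W (mem_univ ω)
  have fiber₁ : ∀ w : ℝ × ℝ × Bool × Bool,
      (∑ ω ∈ univ.filter (fun ω => W ω = w), if Zv ω = zb then P ω else 0)
        = (∑ ω, if Zv ω = zb then P ω else 0) *
          (∑ ω ∈ univ.filter (fun ω => W ω = w), P ω) := by
    rintro ⟨y0, y1, a0, a1⟩
    rw [Finset.sum_filter, Finset.sum_filter]
    have h1 : ∀ ω : Ω, (if W ω = (y0, y1, a0, a1) then (if Zv ω = zb then P ω else 0) else 0)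
        = if Zv ω = zb ∧ Y0 ω = y0 ∧ Y1 ω = y1 ∧ A0 ω = a0 ∧ A1 ω = a1 then P ω else 0 := by
      intro ω
      simp only [hW, Prod.mk.injEq]
      by_cases h : Zv ω = zb <;>
        by_cases h2 : Y0 ω = y0 ∧ Y1 ω = y1 ∧ A0 ω = a0 ∧ A1 ω = a1 <;>
          simp_all
    have h2 : ∀ ω : Ω, (if W ω = (y0, y1, a0, a1) then P ω else 0)
        = if Y0 ω = y0 ∧ Y1 ω = y1 ∧ A0 ω = a0 ∧ A1 ω = a1 then P ω else 0 := by
      intro ω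
      simp only [hW, Prod.mk.injEq]
    simp only [h1, h2]
    exact hrand zb y0 y1 a0 a1
  calc (∑ ω, if Zv ω = zb then P ω * f (Y0 ω) (Y1 ω) (A0 ω) (A1 ω) else 0)
      = ∑ w ∈ univ.image W, ∑ ω ∈ univ.filter (fun ω => W ω = w),
          (if Zv ω = zb then P ω * f (Y0 ω) (Y1 ω) (A0 ω) (A1 ω) else 0) :=
        (Finset.sum_fiberwise_of_maps_to hmaps _).symm
    _ = ∑ w ∈ univ.image W, (f w.1 w.2.1 w.2.2.1 w.2.2.2 *
          ∑ ω ∈ univ.filter (fun ω => W ω = w), (if Zv ω = zb then P ω else 0)) := by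
        refine Finset.sum_congr rfl fun w _ => ?_
        rw [Finset.mul_sum]
        refine Finset.sum_congr rfl fun ω hω => ?_
        have hw : W ω = w := (Finset.mem_filter.mp hω).2
        subst hw
        simp only [hW]
        by_cases h : Zv ω = zb <;> simp [h, mul_comm]
    _ = (∑ ω, if Zv ω = zb then P ω else 0) *
          ∑ w ∈ univ.image W, ∑ ω ∈ univ.filter (fun ω => W ω = w),
            P ω * f (Y0 ω) (Y1 ω) (A0 ω) (A1 ω) := by
        rw [Finset.mul_sum]
        refine Finset.sum_congr rfl fun w _ => ?_
        have hsum : (∑ ω ∈ univ.filter (fun ω => W ω = w), P ω * f (Y0 ω) (Y1 ω) (A0 ω) (A1 ω))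
            = (∑ ω ∈ univ.filter (fun ω => W ω = w), P ω) * f w.1 w.2.1 w.2.2.1 w.2.2.2 := by
          rw [Finset.sum_mul]
          refine Finset.sum_congr rfl fun ω hω => ?_
          have hw : W ω = w := (Finset.mem_filter.mp hω).2
          subst hw
          rfl
        rw [fiber₁ w, hsum]
        ring
    _ = (∑ ω, if Zv ω = zb then P ω else 0) *
        (∑ ω, P ω * f (Y0 ω) (Y1 ω) (A0 ω) (A1 ω)) := by
        rw [Finset.sum_fiberwise_of_maps_to hmaps]

/-- identification of the complier average causal effect: on a finite
probability space carrying an instrument `Zv`, potential treatments `A0, A1` and potential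
outcomes `Y0, Y1`, assume randomization (`Z` independent of `(Y0, Y1, A0, A1)`),
monotonicity (`A1 ≥ A0`), a nonzero average effect of `Z` on `A`, the exclusion
restriction for never takers and always takers, and `0 < P(Z = 1) < 1`.  With the observed
treatment `Av = A(Z)` and outcome `Yv = Y(Z)`, the complier average causal effect equals
the Wald ratio:
`E[Y(1) − Y(0) | A(1) = 1, A(0) = 0]
  = (E[Y | Z=1] − E[Y | Z=0]) / (E[A | Z=1] − E[A | Z=0])`. -/
theorem cace_identification
    {Ω : Type*} [Fintype Ω] (P : Ω → ℝ)
    (hP : ∀ ω, 0 ≤ P ω) (hPsum : ∑ ω, P ω = 1)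
    (Zv : Ω → Bool) (A0 A1 : Ω → Bool) (Y0 Y1 : Ω → ℝ)
    (hrand : ∀ (zb : Bool) (y0 y1 : ℝ) (a0 a1 : Bool),
      (∑ ω, if Zv ω = zb ∧ Y0 ω = y0 ∧ Y1 ω = y1 ∧ A0 ω = a0 ∧ A1 ω = a1 then P ω else 0) =
        (∑ ω, if Zv ω = zb then P ω else 0) *
          (∑ ω, if Y0 ω = y0 ∧ Y1 ω = y1 ∧ A0 ω = a0 ∧ A1 ω = a1 then P ω else 0))
    (hmono : ∀ ω, A0 ω = true → A1 ω = true)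
    (hnonzero :
      (∑ ω, P ω * ((if A1 ω then (1 : ℝ) else 0) - (if A0 ω then 1 else 0))) ≠ 0)
    (hexcl_nt : ∀ ω, A1 ω = false → A0 ω = false → Y1 ω = Y0 ω)
    (hexcl_at : ∀ ω, A1 ω = true → A0 ω = true → Y1 ω = Y0 ω)
    (hz_pos : 0 < ∑ ω, if Zv ω = true then P ω else 0)
    (hz_lt_one : (∑ ω, if Zv ω = true then P ω else 0) < 1)
    (Av : Ω → Bool) (hAv : ∀ ω, Av ω = if Zv ω then A1 ω else A0 ω)
    (Yv : Ω → ℝ) (hYv : ∀ ω, Yv ω = if Zv ω then Y1 ω else Y0 ω) :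
    (∑ ω, if A1 ω = true ∧ A0 ω = false then P ω * (Y1 ω - Y0 ω) else 0) /
        (∑ ω, if A1 ω = true ∧ A0 ω = false then P ω else 0) =
      ((∑ ω, if Zv ω = true then P ω * Yv ω else 0) /
            (∑ ω, if Zv ω = true then P ω else 0) -
        (∑ ω, if Zv ω = false then P ω * Yv ω else 0) /
            (∑ ω, if Zv ω = false then P ω else 0)) /
      ((∑ ω, if Zv ω = true ∧ Av ω = true then P ω else 0) /
            (∑ ω, if Zv ω = true then P ω else 0) -
        (∑ ω, if Zv ω = false ∧ Av ω = true then P ω else 0) /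
            (∑ ω, if Zv ω = false then P ω else 0)) := by
  classical
  have hp1ne : (∑ ω, if Zv ω = true then P ω else 0) ≠ 0 := ne_of_gt hz_pos
  have hsum10 : (∑ ω, if Zv ω = true then P ω else 0)
      + (∑ ω, if Zv ω = false then P ω else 0) = 1 := by
    rw [← Finset.sum_add_distrib, ← hPsum]
    refine Finset.sum_congr rfl fun ω _ => ?_
    cases h : Zv ω <;> simp [h]
  have hp0ne : (∑ ω, if Zv ω = false then P ω else 0) ≠ 0 := by
    have : (0:ℝ) < ∑ ω, if Zv ω = false then P ω else 0 := by linarith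
    exact ne_of_gt this
  -- conditional expectations of Y
  have hY1 : (∑ ω, if Zv ω = true then P ω * Yv ω else 0)
      = (∑ ω, if Zv ω = true then P ω else 0) * ∑ ω, P ω * Y1 ω := by
    have h1 : (∑ ω, if Zv ω = true then P ω * Yv ω else 0)
        = ∑ ω, if Zv ω = true then P ω * Y1 ω else 0 := by
      refine Finset.sum_congr rfl fun ω _ => ?_
      by_cases h : Zv ω = true <;> simp [h, hYv ω]
    rw [h1]
    exact indep_key P Zv A0 A1 Y0 Y1 hrand true (fun _ y1 _ _ => y1)
  have hY0 : (∑ ω, if Zv ω = false then P ω * Yv ω else 0)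
      = (∑ ω, if Zv ω = false then P ω else 0) * ∑ ω, P ω * Y0 ω := by
    have h1 : (∑ ω, if Zv ω = false then P ω * Yv ω else 0)
        = ∑ ω, if Zv ω = false then P ω * Y0 ω else 0 := by
      refine Finset.sum_congr rfl fun ω _ => ?_
      by_cases h : Zv ω = false <;> simp [h, hYv ω]
    rw [h1]
    exact indep_key P Zv A0 A1 Y0 Y1 hrand false (fun y0 _ _ _ => y0)
  -- conditional expectations of A
  have hA1 : (∑ ω, if Zv ω = true ∧ Av ω = true then P ω else 0)
      = (∑ ω, if Zv ω = true then P ω else 0)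
        * ∑ ω, P ω * (if A1 ω then (1:ℝ) else 0) := by
    have h1 : (∑ ω, if Zv ω = true ∧ Av ω = true then P ω else 0)
        = ∑ ω, if Zv ω = true then P ω * (if A1 ω then (1:ℝ) else 0) else 0 := by
      refine Finset.sum_congr rfl fun ω _ => ?_
      cases hz : Zv ω <;> cases ha : A1 ω <;> simp [hAv ω, hz, ha]
    rw [h1]
    exact indep_key P Zv A0 A1 Y0 Y1 hrand true (fun _ _ _ a1 => if a1 then 1 else 0)
  have hA0 : (∑ ω, if Zv ω = false ∧ Av ω = true then P ω else 0)
      = (∑ ω, if Zv ω = false then P ω else 0)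
        * ∑ ω, P ω * (if A0 ω then (1:ℝ) else 0) := by
    have h1 : (∑ ω, if Zv ω = false ∧ Av ω = true then P ω else 0)
        = ∑ ω, if Zv ω = false then P ω * (if A0 ω then (1:ℝ) else 0) else 0 := by
      refine Finset.sum_congr rfl fun ω _ => ?_
      cases hz : Zv ω <;> cases ha : A0 ω <;> simp [hAv ω, hz, ha]
    rw [h1]
    exact indep_key P Zv A0 A1 Y0 Y1 hrand false (fun _ _ a0 _ => if a0 then 1 else 0)
  rw [hY1, hY0, hA1, hA0, mul_div_cancel_left₀ _ hp1ne, mul_div_cancel_left₀ _ hp0ne,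
    mul_div_cancel_left₀ _ hp1ne, mul_div_cancel_left₀ _ hp0ne]
  have hnum : (∑ ω, P ω * Y1 ω) - (∑ ω, P ω * Y0 ω)
      = ∑ ω, if A1 ω = true ∧ A0 ω = false then P ω * (Y1 ω - Y0 ω) else 0 := by
    rw [← Finset.sum_sub_distrib]
    refine Finset.sum_congr rfl fun ω _ => ?_
    rw [← mul_sub]
    by_cases hc : A1 ω = true ∧ A0 ω = false
    · simp [hc]
    · have hy : Y1 ω = Y0 ω := by
        cases h1 : A1 ω <;> cases h0 : A0 ω
        · exact hexcl_nt ω h1 h0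
        · exact absurd (hmono ω h0) (by simp [h1])
        · exact absurd ⟨h1, h0⟩ hc
        · exact hexcl_at ω h1 h0
      simp [hc, hy]
  have hden : (∑ ω, P ω * (if A1 ω then (1:ℝ) else 0))
        - (∑ ω, P ω * (if A0 ω then (1:ℝ) else 0))
      = ∑ ω, if A1 ω = true ∧ A0 ω = false then P ω else 0 := by
    rw [← Finset.sum_sub_distrib]
    refine Finset.sum_congr rfl fun ω _ => ?_
    rw [← mul_sub]
    cases h1 : A1 ω <;> cases h0 : A0 ω
    · simp [h1, h0]
    · exact absurd (hmono ω h0) (by simp [h1])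
    · simp [h1, h0]
    · simp [h1, h0]
  rw [hnum, hden]
end
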